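/- For invertible real n×n matrices A and P, the condition number satisfies κ(A P⁻¹) = σ_max(A P⁻¹)/σ_min(A P⁻¹) ≤ (ε⁻¹ ‖A − P‖_F + 1) · (‖P A⁻¹ − I‖_F + 1), provided ‖P⁻¹‖₂ ≤ ε⁻¹. -/

import Mathlib

open Matrix

/-- Operator 2-norm (largest singular value) of a real square matrix. -/
noncomputable def opNorm {n : ℕ} (M : Matrix (Fin n) (Fin n) ℝ) : ℝ :=
  ‖Matrix.toEuclideanCLM (𝕜 := ℝ) M‖

noncomputable def sigmaMax {n : ℕ} (M : Matrix (Fin n) (Fin n) ℝ) : ℝ := opNorm M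

/-- Smallest singular value of a real square matrix. -/
noncomputable def sigmaMin {n : ℕ} (M : Matrix (Fin n) (Fin n) ℝ) : ℝ :=
  ⨅ x : Metric.sphere (0 : EuclideanSpace ℝ (Fin n)) 1,
    ‖Matrix.toEuclideanCLM (𝕜 := ℝ) M x‖

/-- Frobenius norm of a real square matrix. -/
noncomputable def frobNorm {n : ℕ} (M : Matrix (Fin n) (Fin n) ℝ) : ℝ :=
  Real.sqrt (∑ i, ∑ j, (M i j) ^ 2)

/-!
The condition number of an invertible `M` is at most `‖M‖₂ ‖M⁻¹‖₂`, because every unit vector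
`x = M⁻¹ (M x)` forces `‖M x‖ ≥ ‖M⁻¹‖₂⁻¹`. For `M = A P⁻¹` write `M = (A - P) P⁻¹ + 1` and
`M⁻¹ = (P A⁻¹ - 1) + 1`; the triangle inequality, submultiplicativity and `‖·‖₂ ≤ ‖·‖_F` bound the
two factors.
-/

section OpNorm

variable {n : ℕ}

lemma opNorm_nonneg (M : Matrix (Fin n) (Fin n) ℝ) : 0 ≤ opNorm M :=
  norm_nonneg _

lemma opNorm_mul_le (M N : Matrix (Fin n) (Fin n) ℝ) :
    opNorm (M * N) ≤ opNorm M * opNorm N := by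
  unfold opNorm
  rw [_root_.map_mul]
  exact norm_mul_le _ _

lemma opNorm_add_one_le (M : Matrix (Fin n) (Fin n) ℝ) : opNorm (M + 1) ≤ opNorm M + 1 := by
  unfold opNorm
  rw [map_add, _root_.map_one]
  grw [norm_add_le]
  gcongr
  exact ContinuousLinearMap.norm_id_le

lemma opNorm_le_frobNorm (M : Matrix (Fin n) (Fin n) ℝ) : opNorm M ≤ frobNorm M := by
  refine ContinuousLinearMap.opNorm_le_bound _ (Real.sqrt_nonneg _) fun x => ?_
  simp only [EuclideanSpace.norm_eq, Real.norm_eq_abs, sq_abs, ofLp_toEuclideanCLM, frobNorm]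
  rw [← Real.sqrt_mul (by positivity), Finset.sum_mul]
  gcongr with i
  exact Finset.sum_mul_sq_le_sq_mul_sq Finset.univ (M i) _

lemma one_le_opNorm_mul_sigmaMin [Nonempty (Metric.sphere (0 : EuclideanSpace ℝ (Fin n)) 1)]
    {M N : Matrix (Fin n) (Fin n) ℝ} (hNM : N * M = 1) : 1 ≤ opNorm N * sigmaMin M := by
  rw [sigmaMin, Real.mul_iInf_of_nonneg (opNorm_nonneg N)]
  refine le_ciInf fun x => ?_
  have hx : toEuclideanCLM (𝕜 := ℝ) N (toEuclideanCLM (𝕜 := ℝ) M x) = x := by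
    rw [← mul_apply_eq_comp, ← _root_.map_mul, hNM, _root_.map_one, one_apply_eq_self]
  calc (1 : ℝ) = ‖(x : EuclideanSpace ℝ (Fin n))‖ := (norm_eq_of_mem_sphere x).symm
    _ = ‖toEuclideanCLM (𝕜 := ℝ) N (toEuclideanCLM (𝕜 := ℝ) M x)‖ := by rw [hx]
    _ ≤ opNorm N * ‖toEuclideanCLM (𝕜 := ℝ) M x‖ := ContinuousLinearMap.le_opNorm _ _

lemma sigmaMax_div_sigmaMin_le (M : Matrix (Fin n) (Fin n) ℝ) (hM : IsUnit M.det) :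
    sigmaMax M / sigmaMin M ≤ opNorm M * opNorm M⁻¹ := by
  have hprod := mul_nonneg (opNorm_nonneg M) (opNorm_nonneg M⁻¹)
  rcases isEmpty_or_nonempty (Metric.sphere (0 : EuclideanSpace ℝ (Fin n)) 1) with _ | _
  · -- `n = 0`: the infimum over the empty sphere is `0`, hence so is the quotient.
    simpa [sigmaMin] using hprod
  have hmin := one_le_opNorm_mul_sigmaMin (nonsing_inv_mul M hM)
  have hmin_pos : 0 < sigmaMin M :=
    pos_of_mul_pos_right (one_pos.trans_le hmin) (opNorm_nonneg M⁻¹)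
  rw [div_le_iff₀ hmin_pos, mul_assoc]
  exact le_mul_of_one_le_right (opNorm_nonneg M) hmin

end OpNorm

theorem stmt18_general {n : ℕ} (A P : Matrix (Fin n) (Fin n) ℝ)
    (hA : IsUnit A.det) (hP : IsUnit P.det)
    (ε : ℝ) (hPinv : opNorm P⁻¹ ≤ ε⁻¹) :
    sigmaMax (A * P⁻¹) / sigmaMin (A * P⁻¹) ≤
      (ε⁻¹ * frobNorm (A - P) + 1) * (frobNorm (P * A⁻¹ - 1) + 1) := by
  have hunit : IsUnit (A * P⁻¹).det := by
    rw [det_mul]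
    exact hA.mul (isUnit_nonsing_inv_det_iff.mpr hP)
  have hopNorm : opNorm (A * P⁻¹) ≤ ε⁻¹ * frobNorm (A - P) + 1 := by
    rw [show A * P⁻¹ = (A - P) * P⁻¹ + 1 by rw [sub_mul, mul_nonsing_inv P hP, sub_add_cancel]]
    grw [opNorm_add_one_le, opNorm_mul_le, opNorm_le_frobNorm, hPinv, mul_comm]
    exacts [Real.sqrt_nonneg _, opNorm_nonneg _]
  have hopNorm_inv : opNorm (A * P⁻¹)⁻¹ ≤ frobNorm (P * A⁻¹ - 1) + 1 := by
    rw [Matrix.mul_inv_rev, nonsing_inv_nonsing_inv P hP, ← sub_add_cancel (P * A⁻¹) 1]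
    grw [opNorm_add_one_le, opNorm_le_frobNorm, sub_add_cancel]
  exact (sigmaMax_div_sigmaMin_le _ hunit).trans
    (mul_le_mul hopNorm hopNorm_inv (opNorm_nonneg _) ((opNorm_nonneg _).trans hopNorm))

theorem stmt18 {n : ℕ} (A P : Matrix (Fin n) (Fin n) ℝ)
    (hA : IsUnit A.det) (hP : IsUnit P.det)
    (ε : ℝ) (hε : 0 < ε) (hPinv : opNorm P⁻¹ ≤ ε⁻¹) :
    sigmaMax (A * P⁻¹) / sigmaMin (A * P⁻¹) ≤
      (ε⁻¹ * frobNorm (A - P) + 1) * (frobNorm (P * A⁻¹ - 1) + 1) :=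
  stmt18_general A P hA hP ε hPinv
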